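/- arXiv:1502.06247 — 4 statements merged into one kernel-verified Lean document; each statement's English description precedes it below -/
import Mathlib

section
/- The Lax–Oleinik operators are non-expansive with respect to localized sup norms: for u, v ∈ H(c), every x ∈ M and t > 0, |T⁻ₜu(x) − T⁻ₜv(x)| ≤ sup{|u(y) − v(y)| : d(x,y) ≤ K(c,t)}, where K(c,t) = t(A(0) + C(c + A(1) + 1)) depends only on c and t. -/
open intervalIntegral

/-- A function `u` is dominated by `L + c`. -/
def Dominated {E : Type*} [NormedAddCommGroup E] [NormedSpace ℝ E]
    (L : E → E → ℝ) (c : ℝ) (u : E → ℝ) : Prop :=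
  ∀ a b : ℝ, a ≤ b → ∀ γ γ' : ℝ → E,
    (∀ s, HasDerivAt γ (γ' s) s) → Continuous γ' →
    u (γ b) - u (γ a) ≤ (∫ s in a..b, L (γ s) (γ' s)) + c * (b - a)

/-- The set of values `u (γ 0) + ∫₀ᵗ L(γ, γ')` over `C¹` curves `γ` with `γ t = x`. -/
def laxSet {E : Type*} [NormedAddCommGroup E] [NormedSpace ℝ E]
    (L : E → E → ℝ) (t : ℝ) (u : E → ℝ) (x : E) : Set ℝ :=
  {r | ∃ γ γ' : ℝ → E, (∀ s, HasDerivAt γ (γ' s) s) ∧ Continuous γ' ∧ γ t = x ∧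
    r = u (γ 0) + ∫ s in (0:ℝ)..t, L (γ s) (γ' s)}

/-- The Lax–Oleinik semigroup `T⁻ₜ u (x)`. -/
noncomputable def laxOleinik {E : Type*} [NormedAddCommGroup E] [NormedSpace ℝ E]
    (L : E → E → ℝ) (t : ℝ) (u : E → ℝ) (x : E) : ℝ :=
  sInf (laxSet L t u x)

open MeasureTheory Set Filter Topology

/-!
Feeding an `ε`-minimizing curve `γ` for `T⁻ₜ v (x)` into `T⁻ₜ u (x)` gives
`T⁻ₜ u (x) - T⁻ₜ v (x) ≤ u (γ 0) - v (γ 0) + ε`. Superlinearity with slope `c + A 1 + 1`,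
played against the `(c + A 1)`-Lipschitz bound that domination gives `v`, bounds the length of
`γ`, hence `dist x (γ 0)`, by `K(c, t) + ε`; moving `γ 0` by `ε` into the ball and using the
Lipschitz bounds of `u` and `v` once more finishes the estimate.

`L` is not assumed measurable, so the action of a `C¹` curve may fail to be integrable, in which
case its Bochner integral is `0`. Splicing an arbitrarily short non-integrable window of such a
curve into curves through two arbitrary points shows that then every dominated function is
constant, which disposes of that case.
-/

lemma Real.smoothTransition.deriv_eq_zero_of_nonpos {x : ℝ} (hx : x ≤ 0) :
    deriv smoothTransition x = 0 := by
  have hIio : EqOn (deriv smoothTransition) 0 (Iio 0) := fun y hy => by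
    have : smoothTransition =ᶠ[𝓝 y] fun _ => 0 :=
      eventually_of_mem (Iio_mem_nhds hy) fun z hz => zero_of_nonpos (le_of_lt hz)
    simpa using this.deriv_eq
  have hcont := (smoothTransition.contDiff (n := 1)).continuous_deriv le_rfl
  exact hIio.closure hcont continuous_const (by rwa [closure_Iio])

lemma exists_not_intervalIntegrable_add_div_two_pow {E : Type*} [NormedAddCommGroup E]
    {f : ℝ → E} {μ : Measure ℝ} {a b : ℝ} (h : ¬ IntervalIntegrable f μ a b) (n : ℕ) :
    ∃ p, ¬ IntervalIntegrable f μ p (p + (b - a) / 2 ^ n) := by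
  induction n with
  | zero => exact ⟨a, by simpa using h⟩
  | succ n ih =>
    obtain ⟨p, hp⟩ := ih
    set m := p + (b - a) / 2 ^ (n + 1)
    have hm : m + (b - a) / 2 ^ (n + 1) = p + (b - a) / 2 ^ n := by
      simp only [m, pow_succ]; ring
    by_contra! hall
    exact hp (hm ▸ (hall p).trans (hall m))

section
variable {X : Type*} [PseudoMetricSpace X]

noncomputable def localizedSupDist (u v : X → ℝ) (x : X) (K : ℝ) : ℝ :=
  sSup {r : ℝ | ∃ y : X, dist x y ≤ K ∧ r = |u y - v y|}

lemma localizedSupDist_comm (u v : X → ℝ) (x : X) (K : ℝ) :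
    localizedSupDist u v x K = localizedSupDist v u x K := by
  simp only [localizedSupDist, abs_sub_comm]

lemma abs_sub_le_localizedSupDist {u v : X → ℝ} {Ku Kv : NNReal} (hu : LipschitzWith Ku u)
    (hv : LipschitzWith Kv v) {x y : X} {K : ℝ} (hy : dist x y ≤ K) :
    |u y - v y| ≤ localizedSupDist u v x K := by
  have hset : {r : ℝ | ∃ y : X, dist x y ≤ K ∧ r = |u y - v y|} =
      (fun y => |u y - v y|) '' Metric.closedBall x K := by
    ext r
    simp [dist_comm, eq_comm]
  refine le_csSup ?_ ⟨y, hy, rfl⟩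
  rw [hset]
  exact ((lipschitzWith_one_norm.comp (hu.sub hv)).isBounded_image
    Metric.isBounded_closedBall).bddAbove

end

section
variable {E : Type*} [NormedAddCommGroup E] [NormedSpace ℝ E]

lemma exists_curve_eqOn_Icc_through {γ γ' : ℝ → E} (hd : ∀ s, HasDerivAt γ (γ' s) s)
    (hc : Continuous γ') {p q h : ℝ} (hpq : p ≤ q) (hh : 0 < h) (y z : E) :
    ∃ δ δ' : ℝ → E, (∀ s, HasDerivAt δ (δ' s) s) ∧ Continuous δ' ∧
      δ (p - h) = y ∧ δ (q + h) = z ∧ EqOn δ γ (Icc p q) ∧ EqOn δ' γ' (Icc p q) := by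
  set ψ := Real.smoothTransition
  have hψ : ∀ r, HasDerivAt ψ (deriv ψ r) r := fun r =>
    ((Real.smoothTransition.contDiff (n := 1)).differentiable (by norm_num) r).hasDerivAt
  have hψ' : Continuous (deriv ψ) :=
    (Real.smoothTransition.contDiff (n := 1)).continuous_deriv le_rfl
  have hσ₁ : ∀ s, HasDerivAt (fun s => (p - s) / h) (-h⁻¹) s := fun s => by
    simpa [div_eq_mul_inv] using ((hasDerivAt_id s).const_sub p).div_const h
  have hσ₂ : ∀ s, HasDerivAt (fun s => (s - q) / h) h⁻¹ s := fun s => by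
    simpa [div_eq_mul_inv] using ((hasDerivAt_id s).sub_const q).div_const h
  set Y := y - γ (p - h)
  set Z := z - γ (q + h)
  refine ⟨fun s => γ s + ψ ((p - s) / h) • Y + ψ ((s - q) / h) • Z,
    fun s => γ' s + (deriv ψ ((p - s) / h) * -h⁻¹) • Y + (deriv ψ ((s - q) / h) * h⁻¹) • Z,
    fun s => ((hd s).add (((hψ _).comp s (hσ₁ s)).smul_const Y)).add
      (((hψ _).comp s (hσ₂ s)).smul_const Z), by fun_prop, ?_, ?_, ?_, ?_⟩
  · have h₁ : ψ ((p - (p - h)) / h) = 1 :=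
      Real.smoothTransition.one_of_one_le (by rw [sub_sub_cancel, div_self hh.ne'])
    have h₂ : ψ ((p - h - q) / h) = 0 :=
      Real.smoothTransition.zero_of_nonpos (div_nonpos_of_nonpos_of_nonneg (by linarith) hh.le)
    simp only [h₁, h₂, Y, one_smul, zero_smul, add_zero, add_sub_cancel]
  · have h₁ : ψ ((p - (q + h)) / h) = 0 :=
      Real.smoothTransition.zero_of_nonpos (div_nonpos_of_nonpos_of_nonneg (by linarith) hh.le)
    have h₂ : ψ ((q + h - q) / h) = 1 :=
      Real.smoothTransition.one_of_one_le (by rw [add_sub_cancel_left, div_self hh.ne'])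
    simp only [h₁, h₂, Z, one_smul, zero_smul, add_zero, add_sub_cancel]
  all_goals
    intro s ⟨hps, hsq⟩
    have h₁ : (p - s) / h ≤ 0 := div_nonpos_of_nonpos_of_nonneg (by linarith) hh.le
    have h₂ : (s - q) / h ≤ 0 := div_nonpos_of_nonpos_of_nonneg (by linarith) hh.le
    simp [ψ, Real.smoothTransition.zero_of_nonpos, Real.smoothTransition.deriv_eq_zero_of_nonpos,
      h₁, h₂]

lemma norm_sub_le_integral_norm_of_hasDerivAt {γ γ' : ℝ → E} (hd : ∀ s, HasDerivAt γ (γ' s) s)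
    (hc : Continuous γ') {a b : ℝ} (hab : a ≤ b) : ‖γ b - γ a‖ ≤ ∫ s in a..b, ‖γ' s‖ :=
  image_norm_le_of_norm_deriv_right_le_deriv_boundary (f := fun s => γ s - γ a)
    (fun s _ => ((hd s).sub_const _).continuousAt.continuousWithinAt)
    (fun s _ => ((hd s).sub_const _).hasDerivWithinAt) (by simp)
    (fun s => (hc.norm.integral_hasStrictDerivAt a s).hasDerivAt) (fun _ _ => le_rfl)
    ⟨hab, le_rfl⟩

lemma dist_le_of_cost_le {L : E → E → ℝ} {w : E → ℝ} {ℓ a C ε t : ℝ} (ht : 0 ≤ t)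
    (hlip : ∀ y z, w z - w y ≤ ℓ * dist z y) (hℓ : 0 ≤ ℓ + 1)
    (hC : ∀ x v : E, (ℓ + 1) * ‖v‖ - C ≤ L x v) {γ γ' : ℝ → E}
    (hd : ∀ s, HasDerivAt γ (γ' s) s) (hc : Continuous γ')
    (hint : IntervalIntegrable (fun s => L (γ s) (γ' s)) volume 0 t)
    (hcost : w (γ 0) + ∫ s in (0:ℝ)..t, L (γ s) (γ' s) ≤ w (γ t) + t * a + ε) :
    dist (γ t) (γ 0) ≤ t * (a + C) + ε := by
  have hspeed : Continuous fun s => (ℓ + 1) * ‖γ' s‖ := continuous_const.mul hc.norm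
  have hlen : dist (γ t) (γ 0) ≤ ∫ s in (0:ℝ)..t, ‖γ' s‖ :=
    dist_eq_norm (γ t) (γ 0) ▸ norm_sub_le_integral_norm_of_hasDerivAt hd hc ht
  have hsuper : (ℓ + 1) * (∫ s in (0:ℝ)..t, ‖γ' s‖) - t * C ≤
      ∫ s in (0:ℝ)..t, L (γ s) (γ' s) := by
    have h := intervalIntegral.integral_mono_on (f := fun s => (ℓ + 1) * ‖γ' s‖ - C) ht
      ((hspeed.sub continuous_const).intervalIntegrable _ _) hint fun s _ => hC (γ s) (γ' s)
    rwa [intervalIntegral.integral_sub (hspeed.intervalIntegrable _ _) intervalIntegrable_const,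
      intervalIntegral.integral_const_mul, intervalIntegral.integral_const, smul_eq_mul,
      sub_zero] at h
  linarith [hlip (γ 0) (γ t), mul_le_mul_of_nonneg_left hlen hℓ]

lemma const_mem_laxSet (L : E → E → ℝ) (t : ℝ) (w : E → ℝ) (x : E) :
    w x + t * L x 0 ∈ laxSet L t w x :=
  ⟨fun _ => x, fun _ => 0, fun s => hasDerivAt_const s x, continuous_const, rfl, by simp⟩

namespace Dominated
variable {L : E → E → ℝ} {c : ℝ} {u v w : E → ℝ}

lemma sub_le_of_not_intervalIntegrable (hw : Dominated L c w) {γ γ' : ℝ → E}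
    (hd : ∀ s, HasDerivAt γ (γ' s) s) (hc : Continuous γ') {p q : ℝ} (hpq : p ≤ q)
    (hni : ¬ IntervalIntegrable (fun s => L (γ s) (γ' s)) volume p q) (y z : E) :
    w z - w y ≤ 3 * c * (q - p) := by
  have hpq' : p < q := hpq.lt_of_ne (by rintro rfl; exact hni IntervalIntegrable.refl)
  obtain ⟨δ, δ', hδd, hδc, hδy, hδz, hδγ, hδγ'⟩ :=
    exists_curve_eqOn_Icc_through hd hc hpq (sub_pos.2 hpq') y z
  -- the Bochner integral over the enlarged window is junk `0`, as `δ` copies `γ` on `[p, q]`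
  have hni' : ¬ IntervalIntegrable (fun s => L (δ s) (δ' s)) volume
      (p - (q - p)) (q + (q - p)) := by
    refine fun hint => hni ((hint.mono_set ?_).congr fun s hs => ?_)
    · rw [uIcc_of_le hpq, uIcc_of_le (by linarith)]
      exact Icc_subset_Icc (by linarith) (by linarith)
    · have hs' : s ∈ Icc p q := uIcc_of_le hpq ▸ uIoc_subset_uIcc hs
      simp only [hδγ hs', hδγ' hs']
  have h := hw (p - (q - p)) (q + (q - p)) (by linarith) δ δ' hδd hδc
  rw [hδy, hδz, intervalIntegral.integral_undef hni'] at h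
  linarith

lemma le_of_not_intervalIntegrable (hw : Dominated L c w) {γ γ' : ℝ → E}
    (hd : ∀ s, HasDerivAt γ (γ' s) s) (hc : Continuous γ') {a b : ℝ}
    (hni : ¬ IntervalIntegrable (fun s => L (γ s) (γ' s)) volume a b) (y z : E) :
    w z ≤ w y := by
  wlog hab : a ≤ b generalizing a b
  · exact this (fun h => hni h.symm) (le_of_not_ge hab)
  have hbound : ∀ n : ℕ, w z - w y ≤ 3 * c * (b - a) / 2 ^ n := fun n => by
    obtain ⟨p, hp⟩ := exists_not_intervalIntegrable_add_div_two_pow hni n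
    have hlen : 0 ≤ (b - a) / 2 ^ n := div_nonneg (sub_nonneg.2 hab) (by positivity)
    have h := hw.sub_le_of_not_intervalIntegrable hd hc (le_add_of_nonneg_right hlen) hp y z
    rwa [add_sub_cancel_left, ← mul_div_assoc] at h
  have hlim : Tendsto (fun n : ℕ => 3 * c * (b - a) / 2 ^ n) atTop (𝓝 0) :=
    (tendsto_pow_atTop_atTop_of_one_lt one_lt_two).const_div_atTop _
  linarith [ge_of_tendsto' hlim hbound]

lemma neg_le_lagrangian_zero (hw : Dominated L c w) (x : E) : -c ≤ L x 0 := by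
  have h := hw 0 1 zero_le_one (fun _ => x) (fun _ => 0) (fun s => hasDerivAt_const s x)
    continuous_const
  simp only [sub_self, intervalIntegral.integral_const, sub_zero, one_smul, mul_one] at h
  linarith

lemma sub_le_mul_dist (hw : Dominated L c w) {a : ℝ} (ha : ∀ x v : E, ‖v‖ ≤ 1 → L x v ≤ a)
    (y z : E) : w z - w y ≤ (c + a) * dist z y := by
  obtain rfl | hzy := eq_or_ne z y
  · simp
  set d := dist z y
  have hd : 0 < d := dist_pos.2 hzy
  set e : E := d⁻¹ • (z - y)
  have he : ‖e‖ = 1 := by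
    rw [norm_smul, norm_inv, Real.norm_eq_abs, abs_of_pos hd, ← dist_eq_norm,
      inv_mul_cancel₀ hd.ne']
  have hγ : ∀ s, HasDerivAt (fun s => y + s • e) e s := fun s => by
    simpa only [one_smul] using ((hasDerivAt_id' (𝕜 := ℝ) s).smul_const e).const_add y
  have hγd : y + d • e = z := by rw [smul_inv_smul₀ hd.ne', add_sub_cancel]
  by_cases hint : IntervalIntegrable (fun s => L (y + s • e) e) volume 0 d
  · have h := hw 0 d hd.le _ _ hγ continuous_const
    have hI : ∫ s in (0:ℝ)..d, L (y + s • e) e ≤ d * a := by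
      simpa using intervalIntegral.integral_mono_on hd.le hint intervalIntegrable_const
        fun s _ => ha _ _ he.le
    simp only [hγd, zero_smul, add_zero, sub_zero] at h
    linarith
  · have h := hw.le_of_not_intervalIntegrable hγ continuous_const hint y z
    have hca : 0 ≤ c + a := by linarith [hw.neg_le_lagrangian_zero y, ha y 0 (by simp)]
    linarith [mul_nonneg hca hd.le]

lemma lipschitzWith (hw : Dominated L c w) {a : ℝ} (ha : ∀ x v : E, ‖v‖ ≤ 1 → L x v ≤ a) :
    LipschitzWith (c + a).toNNReal w :=
  LipschitzWith.of_le_add_mul' _ fun y z => by linarith [hw.sub_le_mul_dist ha z y]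

lemma bddBelow_laxSet (hw : Dominated L c w) {t : ℝ} (ht : 0 ≤ t) (x : E) :
    BddBelow (laxSet L t w x) := by
  refine ⟨w x - c * t, ?_⟩
  rintro _ ⟨γ, γ', hd, hc, rfl, rfl⟩
  linarith [hw 0 t ht γ γ' hd hc]

lemma laxOleinik_le (hw : Dominated L c w) {t a : ℝ} (ht : 0 ≤ t) {x : E} (ha : L x 0 ≤ a) :
    laxOleinik L t w x ≤ w x + t * a :=
  (csInf_le (hw.bddBelow_laxSet ht x) (const_mem_laxSet L t w x)).trans (by gcongr)

lemma sub_le_localizedSupDist_of_cost_le (hu : Dominated L c u) (hv : Dominated L c v)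
    {a₀ a₁ C t ε : ℝ} (ha₁ : ∀ x v : E, ‖v‖ ≤ 1 → L x v ≤ a₁)
    (hC : ∀ x v : E, (c + a₁ + 1) * ‖v‖ - C ≤ L x v) (ht : 0 ≤ t) (hK : 0 ≤ t * (a₀ + C))
    (hε : 0 ≤ ε) {γ γ' : ℝ → E} (hd : ∀ s, HasDerivAt γ (γ' s) s) (hc : Continuous γ')
    (hcost : v (γ 0) + ∫ s in (0:ℝ)..t, L (γ s) (γ' s) ≤ v (γ t) + t * a₀ + ε) :
    u (γ 0) - v (γ 0) ≤ localizedSupDist u v (γ t) (t * (a₀ + C)) + 2 * (c + a₁) * ε := by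
  have hℓ : 0 ≤ c + a₁ := by linarith [hu.neg_le_lagrangian_zero (γ 0), ha₁ (γ 0) 0 (by simp)]
  by_cases hint : IntervalIntegrable (fun s => L (γ s) (γ' s)) volume 0 t
  · have hdist := dist_le_of_cost_le ht (hv.sub_le_mul_dist ha₁) (by linarith) hC hd hc hint hcost
    obtain ⟨P, hP, hPγ⟩ := exists_dist_le_le hK hε (by linarith)
    have hsup := abs_sub_le_localizedSupDist (hu.lipschitzWith ha₁) (hv.lipschitzWith ha₁) hP
    have hu' := hu.sub_le_mul_dist ha₁ P (γ 0)
    have hv' := hv.sub_le_mul_dist ha₁ (γ 0) P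
    rw [dist_comm] at hu'
    linarith [le_abs_self (u P - v P), mul_le_mul_of_nonneg_left hPγ hℓ]
  · have hsup := abs_sub_le_localizedSupDist (hu.lipschitzWith ha₁) (hv.lipschitzWith ha₁)
      (dist_self (γ t) ▸ hK)
    linarith [le_abs_self (u (γ t) - v (γ t)), hu.le_of_not_intervalIntegrable hd hc hint
      (γ t) (γ 0), hv.le_of_not_intervalIntegrable hd hc hint (γ 0) (γ t), mul_nonneg hℓ hε]

end Dominated

lemma laxOleinik_sub_le_localizedSupDist {L : E → E → ℝ} {c a₀ a₁ C t : ℝ} {u v : E → ℝ}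
    (hu : Dominated L c u) (hv : Dominated L c v) (ha₀ : ∀ x : E, L x 0 ≤ a₀)
    (ha₁ : ∀ x v : E, ‖v‖ ≤ 1 → L x v ≤ a₁) (hC : ∀ x v : E, (c + a₁ + 1) * ‖v‖ - C ≤ L x v)
    (ht : 0 ≤ t) (x : E) :
    laxOleinik L t u x - laxOleinik L t v x ≤ localizedSupDist u v x (t * (a₀ + C)) := by
  have hℓ : 0 ≤ c + a₁ := by linarith [hu.neg_le_lagrangian_zero x, ha₁ x 0 (by simp)]
  have hK : 0 ≤ t * (a₀ + C) := mul_nonneg ht (by linarith [norm_zero (E := E) ▸ hC x 0, ha₀ x])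
  refine le_of_forall_pos_le_add fun ε hε => ?_
  set δ := ε / (1 + 2 * (c + a₁))
  have hδ : 0 < δ := by positivity
  have hεδ : ε = δ + 2 * (c + a₁) * δ := by
    simp only [δ]; field_simp
  obtain ⟨_, ⟨γ, γ', hd, hc, rfl, rfl⟩, hlt⟩ := exists_lt_of_csInf_lt
    ⟨_, const_mem_laxSet L t v x⟩ (lt_add_of_pos_right (laxOleinik L t v x) hδ)
  have hTu : laxOleinik L t u (γ t) ≤ u (γ 0) + ∫ s in (0:ℝ)..t, L (γ s) (γ' s) :=
    csInf_le (hu.bddBelow_laxSet ht _) ⟨γ, γ', hd, hc, rfl, rfl⟩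
  have hTv := hv.laxOleinik_le ht (ha₀ (γ t))
  have hγ0 := hu.sub_le_localizedSupDist_of_cost_le hv ha₁ hC ht hK hδ.le hd hc
    (by linarith)
  linarith

end

/-- Non-expansiveness with respect to localized sup norms: for `u, v` dominated
by `L + c`, `|T⁻ₜ u (x) - T⁻ₜ v (x)|` is at most the sup of `|u - v|` on the closed ball of
radius `K(c,t) = t * (A 0 + C (c + A 1 + 1))` around `x`, where `A R` bounds `L` on vectors of
norm `≤ R` and `C K` are the superlinearity constants of `L`. -/
theorem laxOleinik_nonexpansive_localized
    {E : Type*} [NormedAddCommGroup E] [NormedSpace ℝ E]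
    (L : E → E → ℝ) (c : ℝ) (A C : ℝ → ℝ)
    (hA : ∀ R : ℝ, 0 ≤ R → ∀ x v : E, ‖v‖ ≤ R → L x v ≤ A R)
    (hC : ∀ K : ℝ, 0 ≤ K → ∀ x v : E, K * ‖v‖ - C K ≤ L x v)
    (u v : E → ℝ) (hu : Dominated L c u) (hv : Dominated L c v)
    (t : ℝ) (ht : 0 < t) (x : E) :
    |laxOleinik L t u x - laxOleinik L t v x| ≤
      sSup {r : ℝ | ∃ y : E, dist x y ≤ t * (A 0 + C (c + A 1 + 1)) ∧ r = |u y - v y|} := by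
  have ha₀ : ∀ x : E, L x 0 ≤ A 0 := fun x => hA 0 le_rfl x 0 (by simp)
  have ha₁ : ∀ x v : E, ‖v‖ ≤ 1 → L x v ≤ A 1 := hA 1 zero_le_one
  have hκ : 0 ≤ c + A 1 + 1 := by linarith [hu.neg_le_lagrangian_zero x, ha₁ x 0 (by simp)]
  have hCκ := hC _ hκ
  have huv := laxOleinik_sub_le_localizedSupDist hu hv ha₀ ha₁ hCκ ht.le x
  have hvu := laxOleinik_sub_le_localizedSupDist hv hu ha₀ ha₁ hCκ ht.le x
  rw [localizedSupDist_comm] at hvu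
  exact abs_sub_le_iff.2 ⟨huv, hvu⟩
end

section
/- Let c(H) = inf{c ∈ ℝ : H(c) ≠ ∅}, where H(c) is the set of functions dominated by L + c, and assume this infimum is finite. Then H(c(H)) ≠ ∅: the sets H(c) for c > c(H) are nonempty nested compact (modulo constants) sets, and there exists a function u dominated by L + c(H). -/
open intervalIntegral

open Filter Topology

/-! The limiting function is the pointwise `limsup` of functions `uₙ` dominated by `L + cₙ`,
where `cₙ ↓ c(H)` and `uₙ(0) = 0`. The `limsup` exists because a function dominated by
`L + c` is `(A + c)`-Lipschitz (test it on unit-speed segments, where `L ≤ A`), and the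
domination inequality passes to the `limsup` since its right-hand side converges. -/

theorem limsup_le_add_limsup_of_le_add {f g r : ℕ → ℝ} {r₀ : ℝ}
    (hr : Tendsto r atTop (𝓝 r₀)) (hfg : ∀ n, f n ≤ r n + g n)
    (hf : IsBoundedUnder (· ≥ ·) atTop f) (hg : IsBoundedUnder (· ≤ ·) atTop g)
    (hg' : IsBoundedUnder (· ≥ ·) atTop g) :
    limsup f atTop ≤ r₀ + limsup g atTop := by
  refine le_of_forall_pos_le_add fun ε hε => ?_
  have hr_lt : ∀ᶠ n in atTop, r n < r₀ + ε := hr.eventually (gt_mem_nhds (by linarith))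
  have hle : limsup f atTop ≤ limsup (fun n => (r₀ + ε) + g n) atTop :=
    limsup_le_limsup (hr_lt.mono fun n hn => (hfg n).trans (by linarith))
      hf.isCoboundedUnder_le (isBoundedUnder_le_add isBoundedUnder_const hg)
  rw [limsup_const_add _ _ _ hg hg'.isCoboundedUnder_le] at hle
  linarith

namespace Dominated

variable {E : Type*} [NormedAddCommGroup E] [NormedSpace ℝ E] {L : E → E → ℝ} {c : ℝ}

theorem sub_const {u : E → ℝ} (hu : Dominated L c u) (k : ℝ) :
    Dominated L c fun x => u x - k := by
  intro a b hab γ γ' hγ hγ'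
  simpa using hu a b hab γ γ' hγ hγ'

theorem sub_le_mul_norm (hL : Continuous fun p : E × E => L p.1 p.2) {A : ℝ}
    (hA : ∀ x v : E, ‖v‖ = 1 → L x v ≤ A) {u : E → ℝ} (hu : Dominated L c u) (x y : E) :
    u y - u x ≤ (A + c) * ‖y - x‖ := by
  rcases eq_or_ne y x with rfl | hxy
  · simp
  set T := ‖y - x‖
  have hT : 0 < T := norm_pos_iff.mpr (sub_ne_zero.mpr hxy)
  set d : E := T⁻¹ • (y - x)
  have hd : ‖d‖ = 1 := by
    rw [norm_smul, norm_inv, Real.norm_of_nonneg hT.le]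
    exact inv_mul_cancel₀ hT.ne'
  let γ : ℝ → E := fun s => x + s • d
  have hγ : ∀ s, HasDerivAt γ d s := fun s =>
    (((hasDerivAt_id s).smul_const d).const_add x).congr_deriv (one_smul ℝ d)
  have hγT : γ T = y := by simp [γ, d, smul_smul, hT.ne']
  have hint : ∫ s in (0 : ℝ)..T, L (γ s) d ≤ A * T := by
    have hcont : Continuous fun s => L (γ s) d := hL.comp
      ((continuous_const.add (continuous_id.smul continuous_const)).prodMk continuous_const)
    calc ∫ s in (0 : ℝ)..T, L (γ s) d ≤ ∫ _ in (0 : ℝ)..T, A :=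
          integral_mono_on hT.le (hcont.intervalIntegrable _ _) intervalIntegrable_const
            fun s _ => hA _ _ hd
      _ = A * T := by simp [mul_comm]
  have key := hu 0 T hT.le γ (fun _ => d) hγ continuous_const
  simp only [hγT, γ, zero_smul, add_zero, sub_zero] at key
  linarith

theorem abs_sub_le_mul_norm (hL : Continuous fun p : E × E => L p.1 p.2) {A : ℝ}
    (hA : ∀ x v : E, ‖v‖ = 1 → L x v ≤ A) {u : E → ℝ} (hu : Dominated L c u) (x y : E) :
    |u y - u x| ≤ (A + c) * ‖y - x‖ := by
  have hyx := hu.sub_le_mul_norm hL hA x y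
  have hxy := hu.sub_le_mul_norm hL hA y x
  rw [norm_sub_rev] at hxy
  exact abs_sub_le_iff.mpr ⟨hyx, hxy⟩

theorem limsup {u : ℕ → E → ℝ} {c : ℕ → ℝ} {c₀ : ℝ} (hu : ∀ n, Dominated L (c n) (u n))
    (hc : Tendsto c atTop (𝓝 c₀)) (hbdd : ∀ x, ∃ C, ∀ n, |u n x| ≤ C) :
    Dominated L c₀ fun x => limsup (fun n => u n x) atTop := by
  intro a b hab γ γ' hγ hγ'
  have bdd_above : ∀ x, IsBoundedUnder (· ≤ ·) atTop fun n => u n x := fun x =>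
    let ⟨C, hC⟩ := hbdd x; isBoundedUnder_of ⟨C, fun n => (abs_le.mp (hC n)).2⟩
  have bdd_below : ∀ x, IsBoundedUnder (· ≥ ·) atTop fun n => u n x := fun x =>
    let ⟨C, hC⟩ := hbdd x; isBoundedUnder_of ⟨-C, fun n => (abs_le.mp (hC n)).1⟩
  have hr : Tendsto (fun n => (∫ s in a..b, L (γ s) (γ' s)) + c n * (b - a)) atTop
      (𝓝 ((∫ s in a..b, L (γ s) (γ' s)) + c₀ * (b - a))) :=
    (hc.mul_const _).const_add _
  have := limsup_le_add_limsup_of_le_add hr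
    (fun n => sub_le_iff_le_add.mp (hu n a b hab γ γ' hγ hγ'))
    (bdd_below _) (bdd_above _) (bdd_below _)
  linarith

end Dominated

theorem critical_value_attained_general
    {E : Type*} [NormedAddCommGroup E] [NormedSpace ℝ E]
    (L : E → E → ℝ) (hLcont : Continuous fun p : E × E => L p.1 p.2)
    (A1 : ℝ) (hA1 : ∀ x v : E, ‖v‖ ≤ 1 → L x v ≤ A1)
    (hne : ∃ c : ℝ, ∃ u : E → ℝ, Dominated L c u)
    (hbdd : BddBelow {c : ℝ | ∃ u : E → ℝ, Dominated L c u}) :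
    ∃ u : E → ℝ, Dominated L (sInf {c : ℝ | ∃ u : E → ℝ, Dominated L c u}) u := by
  obtain ⟨c, hc_anti, hc_lim, hc_mem⟩ := exists_seq_tendsto_sInf hne hbdd
  choose v hv using hc_mem
  have hA : ∀ x v : E, ‖v‖ = 1 → L x v ≤ A1 := fun x v h => hA1 x v h.le
  have hw : ∀ n, Dominated L (c n) fun x => v n x - v n 0 := fun n => (hv n).sub_const _
  refine ⟨_, Dominated.limsup hw hc_lim fun x => ⟨(A1 + c 0) * ‖x‖, fun n => ?_⟩⟩
  calc |v n x - v n 0| ≤ (A1 + c n) * ‖x - 0‖ := (hv n).abs_sub_le_mul_norm hLcont hA 0 x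
    _ ≤ (A1 + c 0) * ‖x‖ := by
      rw [sub_zero]
      gcongr
      exact hc_anti (Nat.zero_le n)

/-- the critical value `c(H) = inf {c | H(c) ≠ ∅}` is attained: if some function
is dominated by `L + c` for some `c`, and the set of such `c` is bounded below, then there is a
function dominated by `L + c(H)`.  (The hypothesis `hA1`, uniform boundedness of `L` on unit
vectors, guarantees that the families `H(c)` are equi-Lipschitz.) -/
theorem critical_value_attained
    {E : Type*} [NormedAddCommGroup E] [NormedSpace ℝ E] [FiniteDimensional ℝ E]
    (L : E → E → ℝ) (hLcont : Continuous fun p : E × E => L p.1 p.2)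
    (A1 : ℝ) (hA1 : ∀ x v : E, ‖v‖ ≤ 1 → L x v ≤ A1)
    (hne : ∃ c : ℝ, ∃ u : E → ℝ, Dominated L c u)
    (hbdd : BddBelow {c : ℝ | ∃ u : E → ℝ, Dominated L c u}) :
    ∃ u : E → ℝ, Dominated L (sInf {c : ℝ | ∃ u : E → ℝ, Dominated L c u}) u :=
  critical_value_attained_general L hLcont A1 hA1 hne hbdd
end

section
/- Let L : TM → ℝ satisfy the uniform superlinearity L(x,v) ≥ ‖v‖ − C(1) and uniform boundedness L(x,v) ≤ A(1) for ‖v‖ ≤ 1. Then every diffeomorphism f : M → M with L(f(x), d_xf(v)) = L(x,v) for all (x,v) is K-Lipschitz for the Riemannian distance, with K = C(1) + A(1) depending only on L. -/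
/-- If `L x v ≥ ‖v‖ - C1` for all `(x, v)` and `L x v ≤ A1` for `‖v‖ ≤ 1`,
then every diffeomorphism `f` (with derivative `Df x` at each `x`) preserving `L`
(`L (f x) (Df x v) = L x v`) is `(C1 + A1)`-Lipschitz. -/
theorem symmetry_is_lipschitz
    {E : Type*} [NormedAddCommGroup E] [NormedSpace ℝ E]
    (L : E → E → ℝ) (C1 A1 : ℝ)
    (hC1 : ∀ x v : E, ‖v‖ - C1 ≤ L x v)
    (hA1 : ∀ x v : E, ‖v‖ ≤ 1 → L x v ≤ A1)
    (f : E → E) (Df : E → (E →L[ℝ] E))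
    (hDf : ∀ x : E, HasFDerivAt f (Df x) x)
    (hinv : ∀ x v : E, L (f x) (Df x v) = L x v) :
    ∀ x y : E, dist (f x) (f y) ≤ (C1 + A1) * dist x y := by
  have hop : ∀ x : E, ‖Df x‖ ≤ C1 + A1 := by
    intro x
    apply ContinuousLinearMap.opNorm_le_of_unit_norm
    · have h0 := (hC1 x 0).trans (hA1 x 0 (by simp))
      simp at h0; linarith
    · intro v hv
      have hv' : ‖v‖ ≤ 1 := hv.le
      have h1 : ‖Df x v‖ - C1 ≤ L (f x) (Df x v) := hC1 _ _
      have h2 : L x v ≤ A1 := hA1 x v hv'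
      have := hinv x v
      nlinarith [norm_nonneg v]
  intro x y
  rw [dist_eq_norm, dist_eq_norm]
  have := Convex.norm_image_sub_le_of_norm_hasFDerivWithin_le
    (f := f) (f' := Df) (s := Set.univ) (C := C1 + A1)
    (fun z _ => (hDf z).hasFDerivWithinAt) (fun z _ => hop z)
    convex_univ (Set.mem_univ y) (Set.mem_univ x)
  exact this
end

section
/- Let G act on M by diffeomorphisms, all K-Lipschitz for a common constant K, and ρ : G → ℝ a homomorphism. Suppose there exist x₀ ∈ M and C₀ such that ρ(g) ≤ C₀ d(gx₀, x₀) for all g ∈ G. Then u(x) = inf_{g ∈ G} (C₀ d(gx, x₀) − ρ(g)) is a real-valued, KC₀-Lipschitz function satisfying u(gx) = u(x) + ρ(g) for all g ∈ G, x ∈ M. -/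
/-- Let `G` act on a metric space `M` by `K`-Lipschitz maps, `ρ : G → ℝ` a
homomorphism with `ρ g ≤ C₀ * dist (g • x₀) x₀` for all `g`.  Then
`u x = inf_g (C₀ * dist (g • x) x₀ - ρ g)` is a `K * C₀`-Lipschitz `ρ`-equivariant function. -/
theorem equivariant_function_from_bounded_cocycle
    {M : Type*} [MetricSpace M] {G : Type*} [Group G] [MulAction G M]
    (K : ℝ) (hK : 0 ≤ K)
    (hLip : ∀ g : G, ∀ x y : M, dist (g • x) (g • y) ≤ K * dist x y)
    (ρ : G → ℝ) (hρ : ∀ g h : G, ρ (g * h) = ρ g + ρ h)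
    (x₀ : M) (C₀ : ℝ) (hC₀ : 0 ≤ C₀)
    (hbound : ∀ g : G, ρ g ≤ C₀ * dist (g • x₀) x₀) :
    ∀ u : M → ℝ,
      (u = fun x => sInf {r : ℝ | ∃ g : G, r = C₀ * dist (g • x) x₀ - ρ g}) →
      (∀ x y : M, |u x - u y| ≤ K * C₀ * dist x y) ∧
      (∀ (g : G) (x : M), u (g • x) = u x + ρ g) := by
  intro u hu
  have hρ1 : ρ 1 = 0 := by
    have := hρ 1 1; simp at this; linarith
  have hρinv : ∀ g : G, ρ g⁻¹ = -ρ g := by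
    intro g
    have := hρ g⁻¹ g; simp [hρ1] at this; linarith
  set S : M → Set ℝ := fun x => {r : ℝ | ∃ g : G, r = C₀ * dist (g • x) x₀ - ρ g} with hS
  have hne : ∀ x : M, (S x).Nonempty := fun x => ⟨C₀ * dist ((1:G) • x) x₀ - ρ 1, 1, rfl⟩
  -- lower bound for elements of S x
  have hlb : ∀ (x : M) (r : ℝ), r ∈ S x → -(K * C₀ * dist x x₀) ≤ r := by
    rintro x r ⟨g, rfl⟩
    have h1 : dist (g • x₀) x₀ ≤ dist (g • x₀) (g • x) + dist (g • x) x₀ := dist_triangle _ _ _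
    have h2 : dist (g • x₀) (g • x) ≤ K * dist x₀ x := hLip g x₀ x
    have h3 : ρ g ≤ C₀ * dist (g • x₀) x₀ := hbound g
    have h4 : C₀ * dist (g • x₀) x₀ ≤ C₀ * (K * dist x₀ x + dist (g • x) x₀) := by
      apply mul_le_mul_of_nonneg_left _ hC₀; linarith
    rw [dist_comm x₀ x] at h4
    nlinarith [dist_nonneg (x := g • x) (y := x₀)]
  have hbdd : ∀ x : M, BddBelow (S x) := fun x => ⟨_, fun r hr => hlb x r hr⟩
  -- one-sided Lipschitz estimate
  have key : ∀ x y : M, u x ≤ u y + K * C₀ * dist x y := by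
    intro x y
    rw [hu]
    simp only
    have : sInf (S x) - K * C₀ * dist x y ≤ sInf (S y) := by
      apply le_csInf (hne y)
      rintro r ⟨g, rfl⟩
      have h2 : dist (g • x) x₀ ≤ K * dist x y + dist (g • y) x₀ := by
        have := dist_triangle (g • x) (g • y) x₀
        have := hLip g x y
        linarith
      have h5 : sInf (S x) ≤ C₀ * dist (g • x) x₀ - ρ g := csInf_le (hbdd x) ⟨g, rfl⟩
      nlinarith
    linarith
  constructor
  · intro x y
    have h1 := key x y
    have h2 := key y x
    rw [dist_comm y x] at h2
    rw [abs_le]; constructor <;> linarith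
  · intro g x
    have hSeq : ∀ r, r ∈ S (g • x) ↔ r - ρ g ∈ S x := by
      intro r
      constructor
      · rintro ⟨g', rfl⟩
        exact ⟨g' * g, by rw [mul_smul, hρ]; ring⟩
      · rintro ⟨g', hg'⟩
        refine ⟨g' * g⁻¹, ?_⟩
        rw [mul_smul, inv_smul_smul, hρ, hρinv]
        linarith
    rw [hu]
    simp only
    apply le_antisymm
    · rw [← sub_le_iff_le_add]
      apply le_csInf (hne x)
      intro r hr
      have : r + ρ g ∈ S (g • x) := by rw [hSeq]; simpa using hr
      have := csInf_le (hbdd (g • x)) this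
      linarith
    · apply le_csInf (hne (g • x))
      intro r hr
      rw [hSeq] at hr
      have := csInf_le (hbdd x) hr
      linarith
end
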